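/- arXiv:1310.3435 — 2 statements merged into one kernel-verified Lean document; each statement's English description precedes it below -/
import Mathlib

section
/- Let Ω_c, Ω_p ⊆ ℝ² be open sets and let Φ : Ω_c → Ω_p, Φ(ξ,η) = (x(ξ,η), y(ξ,η)), be a bijection such that Φ and its inverse Ψ = (ξ(x,y), η(x,y)) are twice continuously differentiable. If both components of Ψ are harmonic on Ω_p (Δξ = 0 and Δη = 0), then at every point of Ω_c the components of Φ satisfy Winslow's inverse equations: α·x_ξξ − 2β·x_ξη + γ·x_ηη = 0 and α·y_ξξ − 2β·y_ξη + γ·y_ηη = 0, where α = x_η² + y_η², β = x_ξ·x_η + y_ξ·y_η, and γ = x_ξ² + y_ξ². -/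
/-- Partial derivative with respect to the first coordinate. -/
noncomputable def pd1 (f : ℝ × ℝ → ℝ) (p : ℝ × ℝ) : ℝ := fderiv ℝ f p (1, 0)

/-- Partial derivative with respect to the second coordinate. -/
noncomputable def pd2 (f : ℝ × ℝ → ℝ) (p : ℝ × ℝ) : ℝ := fderiv ℝ f p (0, 1)

/-- The Laplacian of a real-valued function on ℝ². -/
noncomputable def lap2 (f : ℝ × ℝ → ℝ) (p : ℝ × ℝ) : ℝ := pd1 (pd1 f) p + pd2 (pd2 f) p

/-!
Near `Φ p` we have `Φ ∘ Ψ = id`, so each component `f` of `Φ` satisfies `Δ (f ∘ Ψ) = 0`. The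
second-order chain rule gives `Δ (f ∘ Ψ) = Σᵢ D²f (DΨ eᵢ, DΨ eᵢ) + ∇f · ΔΨ`, and the last term
vanishes since `Ψ` is harmonic. As `DΨ = (DΦ)⁻¹ = adj (DΦ) / det DΦ`, multiplying the remaining
quadratic expression by `(det DΦ)²` turns it into `α f_ξξ − 2β f_ξη + γ f_ηη`.
-/

open Filter Topology

section SecondDerivative

variable {E F G : Type*} [NormedAddCommGroup E] [NormedSpace ℝ E] [NormedAddCommGroup F]
  [NormedSpace ℝ F] [NormedAddCommGroup G] [NormedSpace ℝ G]

theorem fderiv_fderiv_apply {f : E → F} {p : E} (hf : DifferentiableAt ℝ (fderiv ℝ f) p)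
    (v w : E) : fderiv ℝ (fun z => fderiv ℝ f z v) p w = fderiv ℝ (fderiv ℝ f) p w v := by
  rw [fderiv_clm_apply hf (differentiableAt_const v)]
  simp

theorem fderiv_fderiv_apply_comp {f : F → G} {g : E → F} {q : E}
    (hf : ContDiffAt ℝ 2 f (g q)) (hg : ContDiffAt ℝ 2 g q) (v w : E) :
    fderiv ℝ (fun z => fderiv ℝ (f ∘ g) z v) q w =
      fderiv ℝ (fderiv ℝ f) (g q) (fderiv ℝ g q w) (fderiv ℝ g q v) +
        fderiv ℝ f (g q) (fderiv ℝ (fun z => fderiv ℝ g z v) q w) := by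
  have hf_near : ∀ᶠ z in 𝓝 q, DifferentiableAt ℝ f (g z) :=
    hg.continuousAt.eventually ((hf.eventually (by simp)).mono
      fun _ h => h.differentiableAt (by norm_num))
  have hg_near : ∀ᶠ z in 𝓝 q, DifferentiableAt ℝ g z :=
    (hg.eventually (by simp)).mono fun _ h => h.differentiableAt (by norm_num)
  have hchain : (fun z => fderiv ℝ (f ∘ g) z v) =ᶠ[𝓝 q]
      fun z => fderiv ℝ f (g z) (fderiv ℝ g z v) := by
    filter_upwards [hf_near, hg_near] with z hfz hgz
    rw [fderiv_comp z hfz hgz]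
    rfl
  have hDf : DifferentiableAt ℝ (fderiv ℝ f) (g q) :=
    (hf.fderiv_right (m := 1) le_rfl).differentiableAt one_ne_zero
  have hDg : DifferentiableAt ℝ (fderiv ℝ g) q :=
    (hg.fderiv_right (m := 1) le_rfl).differentiableAt one_ne_zero
  have hg_q : DifferentiableAt ℝ g q := hg.differentiableAt (by norm_num)
  rw [hchain.fderiv_eq, fderiv_clm_apply (c := fun z => fderiv ℝ f (g z)) (hDf.comp q hg_q)
    (hDg.clm_apply (differentiableAt_const v)), fderiv_fun_comp q hDf hg_q]
  simp [add_comm]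

end SecondDerivative

theorem ContinuousLinearMap.apply_eq_fst_smul_add_snd_smul {M : Type*} [AddCommGroup M]
    [Module ℝ M] [TopologicalSpace M] (L : ℝ × ℝ →L[ℝ] M) (v : ℝ × ℝ) :
    L v = v.1 • L (1, 0) + v.2 • L (0, 1) := by
  conv_lhs => rw [show v = v.1 • ((1 : ℝ), (0 : ℝ)) + v.2 • ((0 : ℝ), (1 : ℝ)) by simp]
  rw [map_add, map_smul, map_smul]

theorem fderiv_apply_eq_pd (f : ℝ × ℝ → ℝ) (z v : ℝ × ℝ) :
    fderiv ℝ f z v = v.1 * pd1 f z + v.2 * pd2 f z :=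
  (fderiv ℝ f z).apply_eq_fst_smul_add_snd_smul v

theorem lap2_comp {f : ℝ × ℝ → ℝ} {g : ℝ × ℝ → ℝ × ℝ} {q : ℝ × ℝ}
    (hf : ContDiffAt ℝ 2 f (g q)) (hg : ContDiffAt ℝ 2 g q) :
    lap2 (f ∘ g) q =
      fderiv ℝ (fderiv ℝ f) (g q) (fderiv ℝ g q (1, 0)) (fderiv ℝ g q (1, 0)) +
        fderiv ℝ (fderiv ℝ f) (g q) (fderiv ℝ g q (0, 1)) (fderiv ℝ g q (0, 1)) +
        pd1 f (g q) * lap2 (fun z => (g z).1) q + pd2 f (g q) * lap2 (fun z => (g z).2) q := by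
  have hfst : ∀ v, fderiv ℝ (fun z => fderiv ℝ (fun z => (g z).1) z v) q v =
      (fderiv ℝ (fun z => fderiv ℝ g z v) q v).1 := fun v => by
    have h := fderiv_fderiv_apply_comp (f := Prod.fst) contDiff_fst.contDiffAt hg v v
    simp only [show fderiv ℝ (Prod.fst : ℝ × ℝ → ℝ) = fun _ => .fst ℝ ℝ ℝ from
      funext fun _ => fderiv_fst, fderiv_fun_const, Pi.zero_apply, zero_apply,
      ContinuousLinearMap.coe_fst', zero_add] at h
    exact h
  have hsnd : ∀ v, fderiv ℝ (fun z => fderiv ℝ (fun z => (g z).2) z v) q v =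
      (fderiv ℝ (fun z => fderiv ℝ g z v) q v).2 := fun v => by
    have h := fderiv_fderiv_apply_comp (f := Prod.snd) contDiff_snd.contDiffAt hg v v
    simp only [show fderiv ℝ (Prod.snd : ℝ × ℝ → ℝ) = fun _ => .snd ℝ ℝ ℝ from
      funext fun _ => fderiv_snd, fderiv_fun_const, Pi.zero_apply, zero_apply,
      ContinuousLinearMap.coe_snd', zero_add] at h
    exact h
  have hdir : ∀ v, fderiv ℝ (fun z => fderiv ℝ (f ∘ g) z v) q v =
      fderiv ℝ (fderiv ℝ f) (g q) (fderiv ℝ g q v) (fderiv ℝ g q v) +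
        pd1 f (g q) * fderiv ℝ (fun z => fderiv ℝ (fun z => (g z).1) z v) q v +
        pd2 f (g q) * fderiv ℝ (fun z => fderiv ℝ (fun z => (g z).2) z v) q v := fun v => by
    rw [fderiv_fderiv_apply_comp hf hg, fderiv_apply_eq_pd, hfst, hsnd]
    ring
  unfold lap2 pd1 pd2 at *
  rw [hdir, hdir]
  ring

theorem lap2_congr {f g : ℝ × ℝ → ℝ} {q : ℝ × ℝ} (h : f =ᶠ[𝓝 q] g) : lap2 f q = lap2 g q := by
  have h1 : pd1 f =ᶠ[𝓝 q] pd1 g := (h.fderiv (𝕜 := ℝ)).mono fun z hz => by simp only [pd1, hz]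
  have h2 : pd2 f =ᶠ[𝓝 q] pd2 g := (h.fderiv (𝕜 := ℝ)).mono fun z hz => by simp only [pd2, hz]
  show fderiv ℝ (pd1 f) q (1, 0) + fderiv ℝ (pd2 f) q (0, 1) =
    fderiv ℝ (pd1 g) q (1, 0) + fderiv ℝ (pd2 g) q (0, 1)
  rw [h1.fderiv_eq, h2.fderiv_eq]

theorem lap2_continuousLinearMap (ℓ : ℝ × ℝ →L[ℝ] ℝ) (q : ℝ × ℝ) : lap2 ℓ q = 0 := by
  unfold lap2 pd1 pd2
  simp [ContinuousLinearMap.fderiv]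

theorem ContinuousLinearMap.apply_apply_eq_sum_coords {B : ℝ × ℝ →L[ℝ] ℝ × ℝ →L[ℝ] ℝ}
    (v w : ℝ × ℝ) :
    B v w = v.1 * w.1 * B (1, 0) (1, 0) + v.1 * w.2 * B (1, 0) (0, 1) +
      v.2 * w.1 * B (0, 1) (1, 0) + v.2 * w.2 * B (0, 1) (0, 1) := by
  rw [B.apply_eq_fst_smul_add_snd_smul v]
  simp only [add_apply, smul_apply, smul_eq_mul]
  rw [(B (1, 0)).apply_eq_fst_smul_add_snd_smul w, (B (0, 1)).apply_eq_fst_smul_add_snd_smul w]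
  simp only [smul_eq_mul]
  ring

theorem det_sq_mul_sum_apply_inverse {L M : ℝ × ℝ →L[ℝ] ℝ × ℝ}
    (hML : M.comp L = .id ℝ (ℝ × ℝ)) {B : ℝ × ℝ →L[ℝ] ℝ × ℝ →L[ℝ] ℝ}
    (hB : B (1, 0) (0, 1) = B (0, 1) (1, 0)) :
    ((L (1, 0)).1 * (L (0, 1)).2 - (L (0, 1)).1 * (L (1, 0)).2) ^ 2 *
        (B (M (1, 0)) (M (1, 0)) + B (M (0, 1)) (M (0, 1))) =
      ((L (0, 1)).1 ^ 2 + (L (0, 1)).2 ^ 2) * B (1, 0) (1, 0) -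
        2 * ((L (1, 0)).1 * (L (0, 1)).1 + (L (1, 0)).2 * (L (0, 1)).2) * B (0, 1) (1, 0) +
        ((L (1, 0)).1 ^ 2 + (L (1, 0)).2 ^ 2) * B (0, 1) (0, 1) := by
  set a := L (1, 0)
  set b := L (0, 1)
  set u := M (1, 0)
  set u' := M (0, 1)
  set D := a.1 * b.2 - b.1 * a.2
  have hMa : a.1 • u + a.2 • u' = (1, 0) := by
    rw [← M.apply_eq_fst_smul_add_snd_smul, ← ContinuousLinearMap.comp_apply, hML]; rfl
  have hMb : b.1 • u + b.2 • u' = (0, 1) := by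
    rw [← M.apply_eq_fst_smul_add_snd_smul, ← ContinuousLinearMap.comp_apply, hML]; rfl
  simp only [Prod.ext_iff, Prod.fst_add, Prod.snd_add, Prod.smul_fst, Prod.smul_snd,
    smul_eq_mul] at hMa hMb
  -- `M ∘ L = id` says `D • M = adj L`, column by column.
  have hu₁ : D * u.1 = b.2 := by linear_combination b.2 * hMa.1 - a.2 * hMb.1
  have hu₂ : D * u.2 = -a.2 := by linear_combination b.2 * hMa.2 - a.2 * hMb.2
  have hu'₁ : D * u'.1 = -b.1 := by linear_combination a.1 * hMb.1 - b.1 * hMa.1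
  have hu'₂ : D * u'.2 = a.1 := by linear_combination a.1 * hMb.2 - b.1 * hMa.2
  rw [B.apply_apply_eq_sum_coords u u, B.apply_apply_eq_sum_coords u' u']
  linear_combination B (1, 0) (1, 0) * ((D * u.1 + b.2) * hu₁ + (D * u'.1 - b.1) * hu'₁) +
    (B (1, 0) (0, 1) + B (0, 1) (1, 0)) *
      (D * u.2 * hu₁ + b.2 * hu₂ + D * u'.2 * hu'₁ - b.1 * hu'₂) +
    B (0, 1) (0, 1) * ((D * u.2 - a.2) * hu₂ + (D * u'.2 + a.1) * hu'₂) -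
    (a.1 * b.1 + a.2 * b.2) * hB

theorem winslow_equation_of_harmonic_inverse {Φ Ψ : ℝ × ℝ → ℝ × ℝ} {f : ℝ × ℝ → ℝ} {p : ℝ × ℝ}
    (hΦ : DifferentiableAt ℝ Φ p) (hΨ : ContDiffAt ℝ 2 Ψ (Φ p)) (hΨΦ : Ψ ∘ Φ =ᶠ[𝓝 p] id)
    (hξ : lap2 (fun z => (Ψ z).1) (Φ p) = 0) (hη : lap2 (fun z => (Ψ z).2) (Φ p) = 0)
    (hf : ContDiffAt ℝ 2 f p) (hfΨ : lap2 (f ∘ Ψ) (Φ p) = 0) :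
    (pd2 (fun z => (Φ z).1) p ^ 2 + pd2 (fun z => (Φ z).2) p ^ 2) * pd1 (pd1 f) p -
        2 * (pd1 (fun z => (Φ z).1) p * pd2 (fun z => (Φ z).1) p +
          pd1 (fun z => (Φ z).2) p * pd2 (fun z => (Φ z).2) p) * pd2 (pd1 f) p +
        (pd1 (fun z => (Φ z).1) p ^ 2 + pd1 (fun z => (Φ z).2) p ^ 2) * pd2 (pd2 f) p = 0 := by
  have hΨΦp : Ψ (Φ p) = p := hΨΦ.eq_of_nhds
  have hML : (fderiv ℝ Ψ (Φ p)).comp (fderiv ℝ Φ p) = .id ℝ (ℝ × ℝ) := by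
    rw [← fderiv_comp p (hΨ.differentiableAt two_ne_zero) hΦ, hΨΦ.fderiv_eq, fderiv_id]
  have hsum : fderiv ℝ (fderiv ℝ f) p (fderiv ℝ Ψ (Φ p) (1, 0)) (fderiv ℝ Ψ (Φ p) (1, 0)) +
      fderiv ℝ (fderiv ℝ f) p (fderiv ℝ Ψ (Φ p) (0, 1)) (fderiv ℝ Ψ (Φ p) (0, 1)) = 0 := by
    have h := lap2_comp (hΨΦp ▸ hf) hΨ
    rw [hfΨ, hξ, hη, hΨΦp] at h
    linarith
  have hD2f : DifferentiableAt ℝ (fderiv ℝ f) p :=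
    (hf.fderiv_right (m := 1) le_rfl).differentiableAt one_ne_zero
  have hpd : ∀ v w, fderiv ℝ (fun z => fderiv ℝ f z v) p w = fderiv ℝ (fderiv ℝ f) p w v :=
    fderiv_fderiv_apply hD2f
  have hx : ∀ v, fderiv ℝ (fun z => (Φ z).1) p v = (fderiv ℝ Φ p v).1 := by
    simp [fderiv.fst hΦ]
  have hy : ∀ v, fderiv ℝ (fun z => (Φ z).2) p v = (fderiv ℝ Φ p v).2 := by
    simp [fderiv.snd hΦ]
  have h := det_sq_mul_sum_apply_inverse hML ((hf.isSymmSndFDerivAt (by simp)) (1, 0) (0, 1))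
  rw [hsum, mul_zero] at h
  unfold pd1 pd2
  rw [hpd, hpd, hpd, hx, hx, hy, hy]
  linear_combination -h

/-- If `Φ = (x, y) : Ω_c → Ω_p` is a bijection between open sets with twice continuously
differentiable inverse `Ψ = (ξ, η)`, and both components of `Ψ` are harmonic on `Ω_p`, then the
components of `Φ` satisfy Winslow's inverse equations
`α x_ξξ − 2β x_ξη + γ x_ηη = 0` and `α y_ξξ − 2β y_ξη + γ y_ηη = 0` on `Ω_c`, where
`α = x_η² + y_η²`, `β = x_ξ x_η + y_ξ y_η`, `γ = x_ξ² + y_ξ²`. -/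
theorem winslow_inverse_equations
    (Ωc Ωp : Set (ℝ × ℝ)) (hΩc : IsOpen Ωc) (hΩp : IsOpen Ωp)
    (Φ Ψ : ℝ × ℝ → ℝ × ℝ)
    (hbij : Set.BijOn Φ Ωc Ωp)
    (hinv : Set.InvOn Ψ Φ Ωc Ωp)
    (hΦ : ContDiffOn ℝ 2 Φ Ωc)
    (hΨ : ContDiffOn ℝ 2 Ψ Ωp)
    (hharm : ∀ q ∈ Ωp, lap2 (fun z => (Ψ z).1) q = 0 ∧ lap2 (fun z => (Ψ z).2) q = 0) :
    ∀ p ∈ Ωc,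
      let x : ℝ × ℝ → ℝ := fun z => (Φ z).1
      let y : ℝ × ℝ → ℝ := fun z => (Φ z).2
      let α : ℝ := (pd2 x p) ^ 2 + (pd2 y p) ^ 2
      let β : ℝ := pd1 x p * pd2 x p + pd1 y p * pd2 y p
      let γ : ℝ := (pd1 x p) ^ 2 + (pd1 y p) ^ 2
      α * pd1 (pd1 x) p - 2 * β * pd2 (pd1 x) p + γ * pd2 (pd2 x) p = 0 ∧
      α * pd1 (pd1 y) p - 2 * β * pd2 (pd1 y) p + γ * pd2 (pd2 y) p = 0 := by
  intro p hp
  have hq : Φ p ∈ Ωp := hbij.mapsTo hp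
  have hΦp : ContDiffAt ℝ 2 Φ p := hΦ.contDiffAt (hΩc.mem_nhds hp)
  have hΨq : ContDiffAt ℝ 2 Ψ (Φ p) := hΨ.contDiffAt (hΩp.mem_nhds hq)
  have hΨΦ : Ψ ∘ Φ =ᶠ[𝓝 p] id := eventuallyEq_of_mem (hΩc.mem_nhds hp) fun _ hz => hinv.1 hz
  have hΦΨ : Φ ∘ Ψ =ᶠ[𝓝 (Φ p)] id := eventuallyEq_of_mem (hΩp.mem_nhds hq) fun _ hz => hinv.2 hz
  have hwinslow := fun f hf (ℓ : ℝ × ℝ →L[ℝ] ℝ) (hfΨ : f ∘ Ψ =ᶠ[𝓝 (Φ p)] ℓ) =>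
    winslow_equation_of_harmonic_inverse (hΦp.differentiableAt two_ne_zero) hΨq hΨΦ
      (hharm _ hq).1 (hharm _ hq).2 hf ((lap2_congr hfΨ).trans (lap2_continuousLinearMap ℓ _))
  exact ⟨hwinslow _ (contDiffAt_fst.comp p hΦp) (.fst ℝ ℝ ℝ) (hΦΨ.fun_comp Prod.fst),
    hwinslow _ (contDiffAt_snd.comp p hΦp) (.snd ℝ ℝ ℝ) (hΦΨ.fun_comp Prod.snd)⟩
end

section
/- Fix real constants T_1 > 0, T_MC > 0, T_com > 0 and k > 0. For n ∈ ℕ let p_n = (n+1)², let S^SDD(n) = p_n·T_1/(2·k·n·T_MC + T_1) be the stochastic domain decomposition speedup, and let S^PFD(n) = p_n/(1 + (T_com/T_1)·p_n) be the parallel finite difference speedup on the same number p_n of processors. Then S^SDD(n) → ∞ as n → ∞, and there exists N ∈ ℕ such that S^SDD(n) > S^PFD(n) for all n ≥ N; i.e., the speedup of the stochastic algorithm exceeds that of the parallel finite difference method whenever the number of processors is large enough. -/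
/-!
The SDD speedup grows like `(n+1)² / n`, hence linearly in `n`, while the PFD speedup
`p / (1 + c p)` with `c = T_com / T₁` stays below `1 / c` for every number of processors `p`.
-/

open Filter

theorem tendsto_sq_succ_mul_div_linear_atTop {a b : ℝ} (ha : 0 ≤ a) (hb : 0 < b) :
    Tendsto (fun n : ℕ => ((n : ℝ) + 1) ^ 2 * b / (a * n + b)) atTop atTop := by
  have hlin : Tendsto (fun n : ℕ => ((n : ℝ) + 1) * (b / (a + b))) atTop atTop :=
    (tendsto_atTop_add_const_right atTop 1 tendsto_natCast_atTop_atTop).atTop_mul_const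
      (by positivity)
  refine tendsto_atTop_mono (fun n => ?_) hlin
  have hn : (0 : ℝ) ≤ n := n.cast_nonneg
  rw [← mul_div_assoc, div_le_div_iff₀ (by positivity) (by positivity)]
  have hden : (a * n + b) * (((n : ℝ) + 1) * b) ≤ ((n + 1) * (a + b)) * ((n + 1) * b) :=
    mul_le_mul_of_nonneg_right (by nlinarith) (by positivity)
  linarith

theorem div_one_add_mul_lt_inv {c x : ℝ} (hc : 0 < c) (hx : 0 ≤ x) :
    x / (1 + c * x) < c⁻¹ := by
  rw [div_lt_iff₀ (by positivity), mul_add, mul_one, ← mul_assoc, inv_mul_cancel₀ hc.ne', one_mul]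
  exact lt_add_of_pos_left x (inv_pos.2 hc)

/-- With `p_n = (n+1)²` processors, the stochastic domain decomposition speedup
`S^SDD(n) = p_n·T₁/(2·k·n·T_MC + T₁)` tends to infinity, and eventually exceeds the parallel
finite difference speedup `S^PFD(n) = p_n/(1 + (T_com/T₁)·p_n)` on the same number of
processors. -/
theorem sdd_speedup_eventually_beats_pfd
    (T1 TMC Tcom k : ℝ) (hT1 : 0 < T1) (hTMC : 0 < TMC) (hTcom : 0 < Tcom) (hk : 0 < k)
    (p SSDD SPFD : ℕ → ℝ)
    (hp : ∀ n : ℕ, p n = ((n : ℝ) + 1) ^ 2)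
    (hSSDD : ∀ n : ℕ, SSDD n = p n * T1 / (2 * k * (n : ℝ) * TMC + T1))
    (hSPFD : ∀ n : ℕ, SPFD n = p n / (1 + (Tcom / T1) * p n)) :
    Tendsto SSDD atTop atTop ∧ ∃ N : ℕ, ∀ n ≥ N, SPFD n < SSDD n := by
  have hSSDD_tendsto : Tendsto SSDD atTop atTop := by
    refine (tendsto_sq_succ_mul_div_linear_atTop (a := 2 * k * TMC) (by positivity) hT1).congr
      fun n => ?_
    rw [hSSDD, hp, mul_right_comm (2 * k) (n : ℝ) TMC]
  have hSPFD_lt : ∀ n, SPFD n < (Tcom / T1)⁻¹ := fun n => by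
    rw [hSPFD, hp]
    exact div_one_add_mul_lt_inv (by positivity) (by positivity)
  obtain ⟨N, hN⟩ := eventually_atTop.1 (hSSDD_tendsto.eventually_ge_atTop (Tcom / T1)⁻¹)
  exact ⟨hSSDD_tendsto, N, fun n hn => (hSPFD_lt n).trans_le (hN n hn)⟩
end
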